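/- Let V ∈ ℕ, c > 0, and for each i ∈ {1,…,V} let A_i ∈ ℝ^{m×n_i}, F_i : ℝ^{n_i} → ℝ and G : ℝ^m → ℝ be differentiable. Define L_c({p_i},{ν_i},q) = Σ_{i=1}^V [F_i(p_i) + ⟨ν_i, A_i p_i − q⟩ + (c/2)‖A_i p_i − q‖²] + G(q). Suppose points (p_i^k, ν_i^k, q^k) and (p_i^{k−1}, ν_i^{k−1}, q^{k−1}) satisfy, for every i: ν_i^k = ν_i^{k−1} + c(A_i p_i^k − q^{k−1}), ∇F_i(p_i^k) = −A_iᵀν_i^k, and ∇G(q^k) = Σ_{i=1}^V [ν_i^k + c(A_i p_i^k − q^k)]. Then there exists a constant C* > 0, depending only on c and the largest singular values λ_{A_iA_iᵀ} of the matrices A_iA_iᵀ, such that ‖∇L_c(w^k)‖ ≤ C*‖w^k − w^{k−1}‖, where w^k = ({p_i^k},{ν_i^k},q^k) denotes the concatenated point and ‖·‖ is the Euclidean norm. -/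

import Mathlib

open Matrix RealInnerProductSpace

/-- The largest singular value of a square real matrix `B`, via its variational
characterization `λ_B = sup_{‖x‖=1} ‖Bx‖` (Euclidean norms). -/
noncomputable def maxSingularValue {k m : ℕ} (B : Matrix (Fin k) (Fin m) ℝ) : ℝ :=
  sSup {r : ℝ | ∃ x : EuclideanSpace ℝ (Fin m), ‖x‖ = 1 ∧ r = ‖Matrix.toEuclideanLin B x‖}

/-!
At consecutive iterates the optimality conditions cancel most of each partial gradient of `L_c`:
the `q`-block vanishes, the `ν_i`-block is the residual `A_i p_i^k - q^k`, and the `p_i`-block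
is `c A_iᵀ (A_i p_i^k - q^k)`. The dual update rewrites that residual as
`c⁻¹ (ν_i^k - ν_i^{k-1}) + (q^{k-1} - q^k)`, so every block is bounded by the step length
`‖w^k - w^{k-1}‖` times a factor depending only on `c` and the operator norms `‖A_i‖`.
-/

open Function

section GradientCalculus

variable {E F : Type*} [NormedAddCommGroup E] [InnerProductSpace ℝ E] [CompleteSpace E]
  [NormedAddCommGroup F] [InnerProductSpace ℝ F] [CompleteSpace F] {f g : E → ℝ} {f' g' x : E}

theorem hasGradientAt_iff_hasFDerivAt_innerSL :
    HasGradientAt f f' x ↔ HasFDerivAt f (innerSL ℝ f') x :=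
  hasGradientAt_iff_hasFDerivAt

theorem HasGradientAt.add (hf : HasGradientAt f f' x) (hg : HasGradientAt g g' x) :
    HasGradientAt (fun y => f y + g y) (f' + g') x := by
  rw [hasGradientAt_iff_hasFDerivAt_innerSL, map_add]
  exact hf.hasFDerivAt.add hg.hasFDerivAt

theorem HasGradientAt.add_const (hf : HasGradientAt f f' x) (k : ℝ) :
    HasGradientAt (fun y => f y + k) f' x :=
  hasGradientAt_iff_hasFDerivAt.mpr (hf.hasFDerivAt.add_const k)

theorem HasGradientAt.const_add (k : ℝ) (hf : HasGradientAt f f' x) :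
    HasGradientAt (fun y => k + f y) f' x :=
  hasGradientAt_iff_hasFDerivAt.mpr (hf.hasFDerivAt.const_add k)

theorem HasGradientAt.const_mul (k : ℝ) (hf : HasGradientAt f f' x) :
    HasGradientAt (fun y => k * f y) (k • f') x := by
  rw [hasGradientAt_iff_hasFDerivAt_innerSL, map_smul]
  exact hf.hasFDerivAt.const_mul k

theorem HasGradientAt.sum {ι : Type*} (s : Finset ι) {f : ι → E → ℝ} {f' : ι → E}
    (hf : ∀ i ∈ s, HasGradientAt (f i) (f' i) x) :
    HasGradientAt (fun y => ∑ i ∈ s, f i y) (∑ i ∈ s, f' i) x := by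
  rw [hasGradientAt_iff_hasFDerivAt_innerSL, map_sum]
  exact HasFDerivAt.fun_sum fun i hi => (hf i hi).hasFDerivAt

variable {u : E → F} {U : E →L[ℝ] F}

theorem HasFDerivAt.hasGradientAt_inner_left (hu : HasFDerivAt u U x) (v : F) :
    HasGradientAt (fun y => ⟪v, u y⟫) (U.adjoint v) x := by
  rw [hasGradientAt_iff_hasFDerivAt]
  refine ((innerSL ℝ v).hasFDerivAt.comp x hu).congr_fderiv ?_
  ext dx
  simp [ContinuousLinearMap.adjoint_inner_left]

theorem HasFDerivAt.hasGradientAt_norm_sq (hu : HasFDerivAt u U x) :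
    HasGradientAt (fun y => ‖u y‖ ^ 2) ((2 : ℝ) • U.adjoint (u x)) x := by
  rw [hasGradientAt_iff_hasFDerivAt_innerSL]
  convert hu.norm_sq using 1
  ext dx
  simp [ContinuousLinearMap.adjoint_inner_left]

end GradientCalculus

theorem hasGradientAt_sum_update {ι : Type*} [Fintype ι] [DecidableEq ι] {E : ι → Type*}
    [∀ i, NormedAddCommGroup (E i)] [∀ i, InnerProductSpace ℝ (E i)]
    [∀ i, CompleteSpace (E i)] (g : ∀ j, E j → ℝ) (p : ∀ j, E j) {i : ι} {g' : E i}
    (h : HasGradientAt (g i) g' (p i)) :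
    HasGradientAt (fun x => ∑ j, g j (update p i x j)) g' (p i) := by
  have hsplit x : ∑ j, g j (update p i x j) = g i x + ∑ j ∈ Finset.univ \ {i}, g j (p j) := by
    simp_rw [apply_update g p i x]
    exact Finset.sum_update_of_mem (Finset.mem_univ i) _ _
  simp_rw [hsplit]
  exact h.add_const _

section ConsensusLagrangian

variable {ι : Type*} [Fintype ι] {E : ι → Type*}
  [∀ i, NormedAddCommGroup (E i)] [∀ i, InnerProductSpace ℝ (E i)]
  {H : Type*} [NormedAddCommGroup H] [InnerProductSpace ℝ H]
  (F : ∀ i, E i → ℝ) (G : H → ℝ) (T : ∀ i, E i →L[ℝ] H) (c : ℝ)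

noncomputable def consensusLagrangian (p : ∀ i, E i) (ν : ι → H) (q : H) : ℝ :=
  (∑ i, (F i (p i) + ⟪ν i, T i (p i) - q⟫ + c / 2 * ‖T i (p i) - q‖ ^ 2)) + G q

variable {F G T c} [CompleteSpace H] (p : ∀ i, E i) (ν : ι → H) (q : H)

theorem hasGradientAt_consensusLagrangian_consensus {g' : H} (hG : HasGradientAt G g' q) :
    HasGradientAt (fun x => consensusLagrangian F G T c p ν x)
      (g' - ∑ i, (ν i + c • (T i (p i) - q))) q := by
  have hterm : ∀ j ∈ Finset.univ, HasGradientAt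
      (fun x => F j (p j) + ⟪ν j, T j (p j) - x⟫ + c / 2 * ‖T j (p j) - x‖ ^ 2)
      (-(ν j + c • (T j (p j) - q))) q := by
    intro j _
    have hu : HasFDerivAt (fun x => T j (p j) - x) (-ContinuousLinearMap.id ℝ H) q :=
      (hasFDerivAt_id q).const_sub _
    convert ((hu.hasGradientAt_inner_left (ν j)).const_add (F j (p j))).add
      (hu.hasGradientAt_norm_sq.const_mul (c / 2)) using 1
    rw [map_neg, ContinuousLinearMap.adjoint_id]
    simp only [_root_.neg_apply, ContinuousLinearMap.id_apply, smul_smul]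
    rw [div_mul_cancel₀ c two_ne_zero, smul_neg, neg_add]
  have hsum := (HasGradientAt.sum Finset.univ hterm).add hG
  rw [Finset.sum_neg_distrib, neg_add_eq_sub] at hsum
  exact hsum

variable [DecidableEq ι]

theorem hasGradientAt_consensusLagrangian_dual (i : ι) :
    HasGradientAt (fun x => consensusLagrangian F G T c p (update ν i x) q)
      (T i (p i) - q) (ν i) := by
  have hinner : HasGradientAt (fun y => ⟪y, T i (p i) - q⟫) (T i (p i) - q) (ν i) := by
    simpa [real_inner_comm, ContinuousLinearMap.adjoint_id] using
      (hasFDerivAt_id (ν i)).hasGradientAt_inner_left (T i (p i) - q)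
  have hterm := (hinner.const_add (F i (p i))).add_const (c / 2 * ‖T i (p i) - q‖ ^ 2)
  exact (hasGradientAt_sum_update
    (fun j y => F j (p j) + ⟪y, T j (p j) - q⟫ + c / 2 * ‖T j (p j) - q‖ ^ 2) ν
    hterm).add_const (G q)

theorem hasGradientAt_consensusLagrangian_primal [∀ i, CompleteSpace (E i)] {i : ι}
    {f' : E i} (hF : HasGradientAt (F i) f' (p i)) :
    HasGradientAt (fun x => consensusLagrangian F G T c (update p i x) ν q)
      (f' + (T i).adjoint (ν i + c • (T i (p i) - q))) (p i) := by
  have hT : HasFDerivAt (fun x => T i x - q) (T i) (p i) := (T i).hasFDerivAt.sub_const q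
  have hterm := (hF.add (hT.hasGradientAt_inner_left (ν i))).add
    (hT.hasGradientAt_norm_sq.const_mul (c / 2))
  rw [smul_smul, div_mul_cancel₀ c two_ne_zero, add_assoc, ← map_smul, ← map_add] at hterm
  exact (hasGradientAt_sum_update
    (fun j y => F j y + ⟪ν j, T j y - q⟫ + c / 2 * ‖T j y - q‖ ^ 2) p hterm).add_const (G q)

end ConsensusLagrangian

theorem residual_eq_of_dual_update {K V : Type*} [Field K] [AddCommGroup V] [Module K V]
    {c : K} (hc : c ≠ 0) {r νprev νk qprev qk : V} (h : νk = νprev + c • (r - qprev)) :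
    r - qk = c⁻¹ • (νk - νprev) + (qprev - qk) := by
  rw [h, add_sub_cancel_left, smul_smul, inv_mul_cancel₀ hc, one_smul]
  abel

section GradientContraction

variable {ι : Type*} [Fintype ι] {E : ι → Type*}
  [∀ i, NormedAddCommGroup (E i)] [∀ i, InnerProductSpace ℝ (E i)] [∀ i, CompleteSpace (E i)]
  {H : Type*} [NormedAddCommGroup H] [InnerProductSpace ℝ H] [CompleteSpace H]
  (T : ∀ i, E i →L[ℝ] H) (c : ℝ)

-- For `T i = A_i`, `‖T i‖` is the largest singular value of `A_i`, i.e. `√λ_{A_iA_iᵀ}`.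
noncomputable def gradientContractionConstant : ℝ :=
  √(∑ i, ((‖T i‖ * (1 + c)) ^ 2 + (c⁻¹ + 1) ^ 2))

variable {T c}

theorem sqrt_gradient_blocks_le (hc : 0 < c) (Δp : ∀ i, E i) (Δν : ι → H) (Δq : H) :
    √((∑ i, ‖(T i).adjoint (Δν i + c • Δq)‖ ^ 2) + (∑ i, ‖c⁻¹ • Δν i + Δq‖ ^ 2)
        + ‖(0 : H)‖ ^ 2)
      ≤ gradientContractionConstant T c *
        √((∑ i, ‖Δp i‖ ^ 2) + (∑ i, ‖Δν i‖ ^ 2) + ‖Δq‖ ^ 2) := by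
  set S := √((∑ i, ‖Δp i‖ ^ 2) + (∑ i, ‖Δν i‖ ^ 2) + ‖Δq‖ ^ 2)
  have hS : 0 ≤ S := Real.sqrt_nonneg _
  have hΔp : 0 ≤ ∑ i, ‖Δp i‖ ^ 2 := by positivity
  have hΔν_sum : 0 ≤ ∑ i, ‖Δν i‖ ^ 2 := by positivity
  have hΔν : ∀ i, ‖Δν i‖ ≤ S := fun i => by
    have := Finset.single_le_sum (fun j _ => sq_nonneg ‖Δν j‖) (Finset.mem_univ i)
    exact Real.le_sqrt_of_sq_le (by linarith [sq_nonneg ‖Δq‖])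
  have hΔq : ‖Δq‖ ≤ S := Real.le_sqrt_of_sq_le (by linarith)
  have hprimal : ∀ i, ‖(T i).adjoint (Δν i + c • Δq)‖ ≤ ‖T i‖ * (1 + c) * S := fun i =>
    calc ‖(T i).adjoint (Δν i + c • Δq)‖
        ≤ ‖T i‖ * ‖Δν i + c • Δq‖ := by
          simpa only [LinearIsometryEquiv.norm_map] using (T i).adjoint.le_opNorm _
      _ ≤ ‖T i‖ * (S + c * S) := by
          gcongr
          refine (norm_add_le _ _).trans (add_le_add (hΔν i) ?_)
          rw [norm_smul, Real.norm_of_nonneg hc.le]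
          gcongr
      _ = ‖T i‖ * (1 + c) * S := by ring
  have hdual : ∀ i, ‖c⁻¹ • Δν i + Δq‖ ≤ (c⁻¹ + 1) * S := fun i =>
    calc ‖c⁻¹ • Δν i + Δq‖ ≤ c⁻¹ * ‖Δν i‖ + ‖Δq‖ := by
          refine (norm_add_le _ _).trans_eq ?_
          rw [norm_smul, Real.norm_of_nonneg (inv_nonneg.mpr hc.le)]
      _ ≤ c⁻¹ * S + S := by gcongr; exact hΔν i
      _ = (c⁻¹ + 1) * S := by ring
  have hblock : ∀ i, ‖(T i).adjoint (Δν i + c • Δq)‖ ^ 2 + ‖c⁻¹ • Δν i + Δq‖ ^ 2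
      ≤ ((‖T i‖ * (1 + c)) ^ 2 + (c⁻¹ + 1) ^ 2) * S ^ 2 := fun i => by
    rw [add_mul, ← mul_pow, ← mul_pow]
    gcongr
    exacts [hprimal i, hdual i]
  calc √((∑ i, ‖(T i).adjoint (Δν i + c • Δq)‖ ^ 2) + (∑ i, ‖c⁻¹ • Δν i + Δq‖ ^ 2)
        + ‖(0 : H)‖ ^ 2)
      ≤ √((∑ i, ((‖T i‖ * (1 + c)) ^ 2 + (c⁻¹ + 1) ^ 2)) * S ^ 2) := by
        rw [norm_zero, zero_pow two_ne_zero, add_zero, ← Finset.sum_add_distrib,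
          Finset.sum_mul]
        exact Real.sqrt_le_sqrt (Finset.sum_le_sum fun i _ => hblock i)
    _ = gradientContractionConstant T c * S := by
        rw [Real.sqrt_mul (by positivity), Real.sqrt_sq hS, gradientContractionConstant]

end GradientContraction

theorem sqrt_norm_sq_gradient_consensusLagrangian_le {ι : Type*} [Fintype ι] [DecidableEq ι]
    {E : ι → Type*} [∀ i, NormedAddCommGroup (E i)] [∀ i, InnerProductSpace ℝ (E i)]
    [∀ i, CompleteSpace (E i)] {H : Type*} [NormedAddCommGroup H] [InnerProductSpace ℝ H]
    [CompleteSpace H] {F : ∀ i, E i → ℝ} {G : H → ℝ} {T : ∀ i, E i →L[ℝ] H} {c : ℝ}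
    (hc : 0 < c) (pprev : ∀ i, E i) {pk : ∀ i, E i} {νprev νk : ι → H} {qprev qk : H}
    (hdual : ∀ i, νk i = νprev i + c • (T i (pk i) - qprev))
    (hF : ∀ i, HasGradientAt (F i) (-(T i).adjoint (νk i)) (pk i))
    (hG : HasGradientAt G (∑ i, (νk i + c • (T i (pk i) - qk))) qk) :
    √((∑ i,
          ‖gradient (fun x => consensusLagrangian F G T c (update pk i x) νk qk) (pk i)‖ ^ 2)
        + (∑ i,
          ‖gradient (fun x => consensusLagrangian F G T c pk (update νk i x) qk) (νk i)‖ ^ 2)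
        + ‖gradient (fun x => consensusLagrangian F G T c pk νk x) qk‖ ^ 2)
      ≤ gradientContractionConstant T c *
        √((∑ i, ‖pk i - pprev i‖ ^ 2) + (∑ i, ‖νk i - νprev i‖ ^ 2) + ‖qk - qprev‖ ^ 2) := by
  have hres i : T i (pk i) - qk = c⁻¹ • (νk i - νprev i) + (qprev - qk) :=
    residual_eq_of_dual_update hc.ne' (hdual i)
  have hgradPrimal i : gradient (fun x => consensusLagrangian F G T c (update pk i x) νk qk) (pk i)
      = (T i).adjoint ((νk i - νprev i) + c • (qprev - qk)) := by
    rw [(hasGradientAt_consensusLagrangian_primal pk νk qk (hF i)).gradient, neg_add_eq_sub,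
      ← map_sub, add_sub_cancel_left, hres i, smul_add, smul_smul, mul_inv_cancel₀ hc.ne',
      one_smul]
  have hgradDual i : gradient (fun x => consensusLagrangian F G T c pk (update νk i x) qk) (νk i)
      = c⁻¹ • (νk i - νprev i) + (qprev - qk) := by
    rw [(hasGradientAt_consensusLagrangian_dual pk νk qk i).gradient, hres i]
  have hgradConsensus : gradient (fun x => consensusLagrangian F G T c pk νk x) qk = 0 := by
    rw [(hasGradientAt_consensusLagrangian_consensus pk νk qk hG).gradient, sub_self]
  simp only [hgradPrimal, hgradDual, hgradConsensus]
  rw [norm_sub_rev qk qprev]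
  exact sqrt_gradient_blocks_le hc _ _ _

theorem toEuclideanLin_adjoint {k l : ℕ} (B : Matrix (Fin k) (Fin l) ℝ) :
    (toEuclideanLin B).toContinuousLinearMap.adjoint =
      (toEuclideanLin Bᵀ).toContinuousLinearMap := by
  rw [← LinearMap.adjoint_toContinuousLinearMap,
    ← Matrix.toEuclideanLin_conjTranspose_eq_adjoint, conjTranspose_eq_transpose_of_trivial]

/-- Gradient contraction for consecutive consensus-ADMM iterates: for fixed
`c > 0` and matrices `A_i` there is a constant `C* > 0` (depending only on `c` and the
matrices `A_i`, hence only on `c` and the largest singular values `λ_{A_iA_iᵀ}`) such that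
for any differentiable `F_i`, `G`, any `L_c` equal to the consensus augmented Lagrangian,
and any consecutive iterates `w^{k−1}, w^k` satisfying the dual-update condition
`ν_i^k = ν_i^{k−1} + c(A_i p_i^k − q^{k−1})` and the first-order conditions
`∇F_i(p_i^k) = −A_iᵀν_i^k`, `∇G(q^k) = ∑_i [ν_i^k + c(A_i p_i^k − q^k)]`, we have
`‖∇L_c(w^k)‖ ≤ C*‖w^k − w^{k−1}‖` (gradient and point norms computed blockwise). -/
theorem statement15 {V m : ℕ} {n : Fin V → ℕ} (c : ℝ) (hc : 0 < c)
    (A : (i : Fin V) → Matrix (Fin m) (Fin (n i)) ℝ) :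
    ∃ C : ℝ, 0 < C ∧
      ∀ (F : (i : Fin V) → EuclideanSpace ℝ (Fin (n i)) → ℝ),
        (∀ i, Differentiable ℝ (F i)) →
      ∀ G : EuclideanSpace ℝ (Fin m) → ℝ, Differentiable ℝ G →
      ∀ Lc : ((i : Fin V) → EuclideanSpace ℝ (Fin (n i))) →
          (Fin V → EuclideanSpace ℝ (Fin m)) → EuclideanSpace ℝ (Fin m) → ℝ,
        (∀ p ν q, Lc p ν q =
          (∑ i, (F i (p i) + ⟪ν i, Matrix.toEuclideanLin (A i) (p i) - q⟫
            + c / 2 * ‖Matrix.toEuclideanLin (A i) (p i) - q‖ ^ 2)) + G q) →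
      ∀ (pprev pk : (i : Fin V) → EuclideanSpace ℝ (Fin (n i)))
        (νprev νk : Fin V → EuclideanSpace ℝ (Fin m))
        (qprev qk : EuclideanSpace ℝ (Fin m)),
        (∀ i, νk i = νprev i + c • (Matrix.toEuclideanLin (A i) (pk i) - qprev)) →
        (∀ i, gradient (F i) (pk i) = -(Matrix.toEuclideanLin (A i)ᵀ (νk i))) →
        (gradient G qk = ∑ i, (νk i + c • (Matrix.toEuclideanLin (A i) (pk i) - qk))) →
        Real.sqrt ((∑ i, ‖gradient (fun x => Lc (Function.update pk i x) νk qk) (pk i)‖ ^ 2)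
            + (∑ i, ‖gradient (fun x => Lc pk (Function.update νk i x) qk) (νk i)‖ ^ 2)
            + ‖gradient (fun x => Lc pk νk x) qk‖ ^ 2)
          ≤ C * Real.sqrt ((∑ i, ‖pk i - pprev i‖ ^ 2)
              + (∑ i, ‖νk i - νprev i‖ ^ 2) + ‖qk - qprev‖ ^ 2) := by
  let T i := (toEuclideanLin (A i)).toContinuousLinearMap
  refine ⟨gradientContractionConstant T c + 1,
    add_pos_of_nonneg_of_pos (Real.sqrt_nonneg _) one_pos, ?_⟩
  intro F hF G hG Lc hLc pprev pk νprev νk qprev qk hdual hFgrad hGgrad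
  obtain rfl : Lc = consensusLagrangian F G T c := by
    funext p ν q
    exact hLc p ν q
  have hFT i : HasGradientAt (F i) (-(T i).adjoint (νk i)) (pk i) := by
    rw [toEuclideanLin_adjoint, LinearMap.coe_toContinuousLinearMap', ← hFgrad i]
    exact (hF i (pk i)).hasGradientAt
  have hdualT i : νk i = νprev i + c • (T i (pk i) - qprev) := by
    simpa only [T, LinearMap.coe_toContinuousLinearMap'] using hdual i
  have hGT : HasGradientAt G (∑ i, (νk i + c • (T i (pk i) - qk))) qk := by
    simpa only [T, LinearMap.coe_toContinuousLinearMap', ← hGgrad] using (hG qk).hasGradientAt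
  refine (sqrt_norm_sq_gradient_consensusLagrangian_le hc pprev hdualT hFT hGT).trans ?_
  gcongr
  linarith
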